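/- arXiv:1608.03979 — 4 statements merged into one kernel-verified Lean document; each statement's English description precedes it below -/
import Mathlib

section
/- The pointwise logarithm log_G : G⁺ → G, a ↦ log∘a, is well defined (log∘a is bounded and continuous for a ∈ G⁺), is a two-sided inverse to exp_G : G → G⁺, is of class C^∞ on the open set G⁺, and its Fréchet derivative at a ∈ G⁺ is the continuous linear map u ↦ u/a (pointwise quotient). In particular exp_G : G → G⁺ is a C^∞ diffeomorphism onto G⁺. -/
open MeasureTheory BoundedContinuousFunction

noncomputable section

namespace Paper

variable {Y : Type*} [TopologicalSpace Y]

/-- Pointwise exponential map on `G = C_b(B;ℝ)`: `expG a x = exp (a x)`. -/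
def expG (a : BoundedContinuousFunction Y ℝ) : BoundedContinuousFunction Y ℝ :=
  BoundedContinuousFunction.ofNormedAddCommGroup (fun x => Real.exp (a x))
    (Real.continuous_exp.comp a.continuous) (Real.exp ‖a‖)
    (fun x => by
      rw [Real.norm_eq_abs, abs_of_pos (Real.exp_pos _)]
      exact Real.exp_le_exp.2 ((le_abs_self _).trans (a.norm_coe_le_norm x)))

@[simp] lemma expG_apply (a : BoundedContinuousFunction Y ℝ) (x : Y) :
    expG a x = Real.exp (a x) := rfl

/-- The set `G⁺` of functions with strictly positive infimum. -/
def Gplus : Set (BoundedContinuousFunction Y ℝ) :=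
  {a | ∃ ε > 0, ∀ x, ε ≤ a x}

/-- Amari's α-embedding chart `φ_α`. -/
def phi (α : ℝ) (a : BoundedContinuousFunction Y ℝ) : BoundedContinuousFunction Y ℝ :=
  if α = 1 then a else (2 / (1 - α)) • (expG (((1 - α) / 2) • a) - 1)

end Paper

/-!
`G = C_b(Y, ℝ)` is a commutative real Banach algebra in which `expG` is the Banach-algebra
exponential, so `expG` is analytic with derivative at `b` the multiplication by the unit
`exp b`. Since `log ∘ a` is bounded for `a ∈ G⁺`, the range of `expG` is exactly `G⁺`, and a left
inverse of `expG` is a two-sided inverse there. The inverse function theorem then makes it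
smooth near every `exp b = a`, with derivative the multiplication by `(exp b)⁻¹ = 1 / a`.
-/

open NormedSpace Filter Topology ContDiff

theorem ContDiffAt.to_local_left_inverse {𝕂 E F : Type*} [RCLike 𝕂]
    [NormedAddCommGroup E] [NormedSpace 𝕂 E] [CompleteSpace E]
    [NormedAddCommGroup F] [NormedSpace 𝕂 F]
    {f : E → F} {f' : E ≃L[𝕂] F} {g : F → E} {a : E} {n : WithTop ℕ∞}
    (hf : ContDiffAt 𝕂 n f a) (hf' : HasFDerivAt f (f' : E →L[𝕂] F) a) (hn : n ≠ 0)
    (hg : ∀ᶠ x in 𝓝 a, g (f x) = x) : ContDiffAt 𝕂 n g (f a) :=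
  (hf.to_localInverse hf' hn).congr_of_eventuallyEq
    ((hf.hasStrictFDerivAt' hf' hn).localInverse_unique hg)

-- `NormedSpace.isUnit_exp` would require a `NormedAlgebra ℚ 𝔸` instance.
theorem isUnit_exp_of_rclike (𝕂 : Type*) {𝔸 : Type*} [RCLike 𝕂] [NormedRing 𝔸]
    [NormedAlgebra 𝕂 𝔸] [CompleteSpace 𝔸] (x : 𝔸) : IsUnit (exp x) :=
  isUnit_exp_of_mem_ball (𝕂 := 𝕂) <| (expSeries_radius_eq_top 𝕂 𝔸).symm ▸ edist_lt_top _ _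

theorem contDiff_exp_of_rclike {𝕂 𝔸 : Type*} [RCLike 𝕂] [NormedRing 𝔸] [NormedAlgebra 𝕂 𝔸]
    [CompleteSpace 𝔸] : ContDiff 𝕂 ω (exp : 𝔸 → 𝔸) :=
  contDiff_iff_contDiffAt.2 fun x => (exp_analytic x).contDiffAt

section CommBanachAlgebra

variable {𝕂 𝔸 : Type*} [RCLike 𝕂] [NormedCommRing 𝔸] [NormedAlgebra 𝕂 𝔸] [CompleteSpace 𝔸]

theorem hasStrictFDerivAt_exp_smulLeft {x : 𝔸} (u : 𝔸ˣ) (hu : (u : 𝔸) = exp x) :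
    HasStrictFDerivAt exp ((ContinuousLinearEquiv.smulLeft u : 𝔸 ≃L[𝕂] 𝔸) : 𝔸 →L[𝕂] 𝔸) x := by
  convert hasStrictFDerivAt_exp (𝕂 := 𝕂) (x := x) using 1
  ext v
  simp [Units.smul_def, hu]

variable {g : 𝔸 → 𝔸}

theorem hasStrictFDerivAt_of_leftInverse_exp (hg : Function.LeftInverse g exp) {x : 𝔸}
    (u : 𝔸ˣ) (hu : (u : 𝔸) = exp x) :
    HasStrictFDerivAt g ((ContinuousLinearEquiv.smulLeft u : 𝔸 ≃L[𝕂] 𝔸).symm : 𝔸 →L[𝕂] 𝔸) u := by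
  rw [hu]
  exact (hasStrictFDerivAt_exp_smulLeft u hu).to_local_left_inverse (Eventually.of_forall hg)

theorem contDiffAt_of_leftInverse_exp (hg : Function.LeftInverse g exp) (x : 𝔸) :
    ContDiffAt 𝕂 ω g (exp x) :=
  ContDiffAt.to_local_left_inverse (exp_analytic x).contDiffAt
    (hasStrictFDerivAt_exp_smulLeft (isUnit_exp_of_rclike 𝕂 x).unit rfl).hasFDerivAt (by simp)
    (Eventually.of_forall hg)

end CommBanachAlgebra

theorem BoundedContinuousFunction.val_inv_units_apply {Y 𝕜 : Type*} [TopologicalSpace Y]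
    [NormedField 𝕜] (u : (Y →ᵇ 𝕜)ˣ) (x : Y) : (↑u⁻¹ : Y →ᵇ 𝕜) x = ((u : Y →ᵇ 𝕜) x)⁻¹ :=
  eq_inv_of_mul_eq_one_left congr($(u.inv_mul) x)

namespace Paper

variable {Y : Type*} [TopologicalSpace Y]

theorem expG_eq_exp (a : Y →ᵇ ℝ) : expG a = exp a := by
  ext x
  rw [expG_apply, Real.exp_eq_exp_ℝ]
  exact (map_exp ((ContinuousMap.evalAlgHom ℝ ℝ x).comp (toContinuousMapₐ ℝ))
    (continuous_eval_const x) a).symm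

theorem contDiff_expG : ContDiff ℝ ω (expG : (Y →ᵇ ℝ) → Y →ᵇ ℝ) := by
  rw [funext expG_eq_exp]
  exact contDiff_exp_of_rclike

theorem expG_injective : Function.Injective (expG : (Y →ᵇ ℝ) → Y →ᵇ ℝ) :=
  fun _ _ h => ext fun x => Real.exp_injective congr($h x)

theorem expG_mem_Gplus (a : Y →ᵇ ℝ) : expG a ∈ Gplus :=
  ⟨Real.exp (-‖a‖), Real.exp_pos _, fun x =>
    Real.exp_le_exp.2 (neg_le_of_abs_le (a.norm_coe_le_norm x))⟩

theorem mem_range_expG_of_mem_Gplus {a : Y →ᵇ ℝ} (ha : a ∈ Gplus) : a ∈ Set.range expG := by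
  obtain ⟨ε, hε, hle⟩ := ha
  have hpos x : 0 < a x := hε.trans_le (hle x)
  refine ⟨ofNormedAddCommGroup (fun x => Real.log (a x))
    (a.continuous.log fun x => (hpos x).ne') (max |Real.log ε| |Real.log ‖a‖|) fun x => ?_, ?_⟩
  · exact abs_le_max_abs_abs (Real.log_le_log hε (hle x))
      (Real.log_le_log (hpos x) ((le_abs_self _).trans (a.norm_coe_le_norm x)))
  · ext x
    exact Real.exp_log (hpos x)

theorem range_expG : Set.range (expG : (Y →ᵇ ℝ) → Y →ᵇ ℝ) = Gplus :=
  Set.Subset.antisymm (Set.range_subset_iff.2 expG_mem_Gplus)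
    fun _ => mem_range_expG_of_mem_Gplus

-- Off `G⁺ = range expG` the value of `invFun` is junk.
def logG : (Y →ᵇ ℝ) → Y →ᵇ ℝ := Function.invFun (expG (Y := Y))

theorem logG_expG (a : Y →ᵇ ℝ) : logG (expG a) = a :=
  Function.leftInverse_invFun expG_injective a

theorem expG_logG {a : Y →ᵇ ℝ} (ha : a ∈ Gplus) : expG (logG a) = a :=
  Function.invFun_eq (mem_range_expG_of_mem_Gplus ha)

theorem logG_apply {a : Y →ᵇ ℝ} (ha : a ∈ Gplus) (x : Y) : logG a x = Real.log (a x) := by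
  rw [← expG_logG ha, expG_apply, Real.log_exp, expG_logG ha]

theorem leftInverse_logG_exp : Function.LeftInverse logG (exp : (Y →ᵇ ℝ) → Y →ᵇ ℝ) :=
  fun a => by rw [← expG_eq_exp, logG_expG]

theorem contDiffAt_logG {a : Y →ᵇ ℝ} (ha : a ∈ Gplus) : ContDiffAt ℝ ω logG a := by
  simpa only [← expG_eq_exp, expG_logG ha] using
    contDiffAt_of_leftInverse_exp leftInverse_logG_exp (logG a)

theorem hasStrictFDerivAt_logG {a : Y →ᵇ ℝ} (ha : a ∈ Gplus) :
    ∃ D : (Y →ᵇ ℝ) →L[ℝ] Y →ᵇ ℝ, (∀ u x, D u x = u x / a x) ∧ HasStrictFDerivAt logG D a := by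
  have hexp : exp (logG a) = a := by rw [← expG_eq_exp, expG_logG ha]
  have hunit : IsUnit a := hexp ▸ isUnit_exp_of_rclike ℝ (logG a)
  refine ⟨_, fun u x => ?_,
    hasStrictFDerivAt_of_leftInverse_exp leftInverse_logG_exp hunit.unit hexp.symm⟩
  change (↑hunit.unit⁻¹ * u) x = u x / a x
  rw [mul_apply, val_inv_units_apply, IsUnit.unit_spec, div_eq_inv_mul]

end Paper

theorem statement_2_general {X : Type*} [NormedAddCommGroup X]
    (B : Set X) :
    ∃ logG : BoundedContinuousFunction B ℝ → BoundedContinuousFunction B ℝ,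
      (∀ a ∈ Paper.Gplus (Y := B), ∀ x, logG a x = Real.log (a x)) ∧
      (∀ a : BoundedContinuousFunction B ℝ, logG (Paper.expG a) = a) ∧
      (∀ a ∈ Paper.Gplus (Y := B), Paper.expG (logG a) = a) ∧
      ContDiffOn ℝ (⊤ : ℕ∞) logG (Paper.Gplus (Y := B)) ∧
      (∀ a ∈ Paper.Gplus (Y := B),
        ∃ D : BoundedContinuousFunction B ℝ →L[ℝ] BoundedContinuousFunction B ℝ,
          (∀ u : BoundedContinuousFunction B ℝ, ∀ x, D u x = u x / a x) ∧
          HasFDerivAt logG D a) ∧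
      Set.range (Paper.expG (Y := B)) = Paper.Gplus ∧
      ContDiff ℝ (⊤ : ℕ∞) (Paper.expG (Y := B)) := by
  refine ⟨Paper.logG, fun _ ha x => Paper.logG_apply ha x, Paper.logG_expG,
    fun _ ha => Paper.expG_logG ha,
    fun _ ha => ((Paper.contDiffAt_logG ha).of_le le_top).contDiffWithinAt,
    fun _ ha => ?_, Paper.range_expG, Paper.contDiff_expG.of_le le_top⟩
  obtain ⟨D, hD, hlog⟩ := Paper.hasStrictFDerivAt_logG ha
  exact ⟨D, hD, hlog.hasFDerivAt⟩

/-- the pointwise logarithm `log_G : G⁺ → G` is well defined (it agrees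
pointwise with `log ∘ a` on `G⁺`), is a two-sided inverse of `exp_G : G → G⁺`, is of
class `C^∞` on the open set `G⁺`, and its Fréchet derivative at `a ∈ G⁺` is
`u ↦ u / a` (pointwise quotient).  In particular `exp_G : G → G⁺` is a `C^∞`
diffeomorphism onto `G⁺`. -/
theorem statement_2 {X : Type*} [NormedAddCommGroup X] [NormedSpace ℝ X]
    (B : Set X) (hB : IsOpen B) (hBne : B.Nonempty) :
    ∃ logG : BoundedContinuousFunction B ℝ → BoundedContinuousFunction B ℝ,
      (∀ a ∈ Paper.Gplus (Y := B), ∀ x, logG a x = Real.log (a x)) ∧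
      (∀ a : BoundedContinuousFunction B ℝ, logG (Paper.expG a) = a) ∧
      (∀ a ∈ Paper.Gplus (Y := B), Paper.expG (logG a) = a) ∧
      ContDiffOn ℝ (⊤ : ℕ∞) logG (Paper.Gplus (Y := B)) ∧
      (∀ a ∈ Paper.Gplus (Y := B),
        ∃ D : BoundedContinuousFunction B ℝ →L[ℝ] BoundedContinuousFunction B ℝ,
          (∀ u : BoundedContinuousFunction B ℝ, ∀ x, D u x = u x / a x) ∧
          HasFDerivAt logG D a) ∧
      Set.range (Paper.expG (Y := B)) = Paper.Gplus ∧
      ContDiff ℝ (⊤ : ℕ∞) (Paper.expG (Y := B)) :=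
  statement_2_general B
end
end

section
/- For each α ∈ ℝ with α ≠ ±1 and all a, b ∈ G: (i) D^α(a‖b) ≥ 0; (ii) D^{−α}(a‖b) = D^α(b‖a); and (iii) if μ has full support, i.e. μ(A) > 0 for every nonempty open A ⊆ B, then D^α(a‖b) = 0 if and only if a = b. -/
/-!
Write `c = (1 - α)/2` and `d = (1 + α)/2`, so that `c + d = 1`. At a point where `a = u` and
`b = v`, the integrand of `D^α(a‖b)` equals `exp (c u + d v) · g (u - v)` with
`g t = (e^{d t} - 1)/d + (e^{-c t} - 1)/c`. Since `g 0 = 0` and `g' t = e^{d t} - e^{-c t}` has the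
sign of `t`, `g` is positive away from `0`, whatever the signs of `c` and `d`. So the integrand is a
nonnegative continuous function vanishing exactly where `a = b`, and a measure of full support
charges the open set where it is positive.
-/

open MeasureTheory BoundedContinuousFunction

noncomputable section

namespace Paper

variable {Y : Type*} [TopologicalSpace Y]

variable [MeasurableSpace Y]

/-- The α-divergence `D^α(a‖b)` (for `α ≠ ±1`) between the finite measures with
`μ`-densities `exp_G(a)` and `exp_G(b)`. -/
def Dalpha (μ : Measure Y) (α : ℝ) (a b : BoundedContinuousFunction Y ℝ) : ℝ :=
  (2 / (1 + α)) * ∫ x, (phi (-1) a x - phi α a x) ∂μ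
    + (2 / (1 - α)) * ∫ x, (phi (-1) b x - phi (-α) b x) ∂μ
    - ∫ x, phi α a x * phi (-α) b x ∂μ

/-- The extended Kullback–Leibler divergence `D^{−1}(a‖b)`. -/
def DKL (μ : Measure Y) (a b : BoundedContinuousFunction Y ℝ) : ℝ :=
  ∫ x, (expG b x - expG a x) ∂μ + ∫ x, expG a x * (a x - b x) ∂μ

end Paper

def expDefect (c d t : ℝ) : ℝ :=
  (Real.exp (d * t) - 1) / d + (Real.exp (-c * t) - 1) / c

section expDefect

variable {c d : ℝ}

@[simp] lemma expDefect_zero (c d : ℝ) : expDefect c d 0 = 0 := by simp [expDefect]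

lemma continuous_expDefect (c d : ℝ) : Continuous (expDefect c d) := by
  unfold expDefect; fun_prop

lemma hasDerivAt_expDefect (hc : c ≠ 0) (hd : d ≠ 0) (t : ℝ) :
    HasDerivAt (expDefect c d) (Real.exp (d * t) - Real.exp (-c * t)) t := by
  have hdt : HasDerivAt (fun t => (Real.exp (d * t) - 1) / d) (Real.exp (d * t)) t := by
    simpa [hd] using (((hasDerivAt_id t).const_mul d).exp.sub_const 1).div_const d
  have hct : HasDerivAt (fun t => (Real.exp (-c * t) - 1) / c) (-Real.exp (-c * t)) t := by
    simpa [hc, neg_div] using (((hasDerivAt_id t).const_mul (-c)).exp.sub_const 1).div_const c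
  exact hdt.add hct

lemma expDefect_pos (hc : c ≠ 0) (hd : d ≠ 0) (hcd : c + d = 1) {t : ℝ} (ht : t ≠ 0) :
    0 < expDefect c d t := by
  -- `d s - (-c s) = s`, so the derivative has the sign of `s`
  have deriv_eq (s : ℝ) : deriv (expDefect c d) s = Real.exp (d * s) - Real.exp (-c * s) :=
    (hasDerivAt_expDefect hc hd s).deriv
  rcases ht.lt_or_gt with hneg | hpos
  · have hanti : StrictAntiOn (expDefect c d) (Set.Iic 0) := by
      refine strictAntiOn_of_deriv_neg (convex_Iic 0) (continuous_expDefect c d).continuousOn ?_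
      intro s hs
      rw [interior_Iic] at hs
      rw [deriv_eq, sub_neg, Real.exp_lt_exp]
      nlinarith [hs.out]
    simpa using hanti hneg.le Set.self_mem_Iic hneg
  · have hmono : StrictMonoOn (expDefect c d) (Set.Ici 0) := by
      refine strictMonoOn_of_deriv_pos (convex_Ici 0) (continuous_expDefect c d).continuousOn ?_
      intro s hs
      rw [interior_Ici] at hs
      rw [deriv_eq, sub_pos, Real.exp_lt_exp]
      nlinarith [hs.out]
    simpa using hmono Set.self_mem_Ici hpos.le hpos

lemma expDefect_nonneg (hc : c ≠ 0) (hd : d ≠ 0) (hcd : c + d = 1) (t : ℝ) :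
    0 ≤ expDefect c d t := by
  rcases eq_or_ne t 0 with rfl | ht
  · simp
  · exact (expDefect_pos hc hd hcd ht).le

lemma exp_div_add_exp_div_sub_exp_eq (hc : c ≠ 0) (hd : d ≠ 0) (hcd : c + d = 1) (u v : ℝ) :
    Real.exp u / d + Real.exp v / c - Real.exp (c * u + d * v) / (c * d)
      = Real.exp (c * u + d * v) * expDefect c d (u - v) := by
  have hu : Real.exp u = Real.exp (c * u + d * v) * Real.exp (d * (u - v)) := by
    rw [← Real.exp_add]; congr 1; linear_combination -u * hcd
  have hv : Real.exp v = Real.exp (c * u + d * v) * Real.exp (-c * (u - v)) := by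
    rw [← Real.exp_add]; congr 1; linear_combination -v * hcd
  rw [hu, hv, expDefect]
  field_simp
  linear_combination hcd

end expDefect

namespace Paper

variable {Y : Type*} [TopologicalSpace Y]

lemma phi_apply_of_ne_one {r : ℝ} (hr : r ≠ 1) (f : BoundedContinuousFunction Y ℝ) (x : Y) :
    phi r f x = 2 / (1 - r) * (Real.exp ((1 - r) / 2 * f x) - 1) := by
  simp [phi, hr]

lemma half_one_sub_ne_zero {α : ℝ} (hα : α ≠ 1) : (1 - α) / 2 ≠ 0 :=
  div_ne_zero (sub_ne_zero.2 hα.symm) two_ne_zero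

lemma half_one_add_ne_zero {α : ℝ} (hα : α ≠ -1) : (1 + α) / 2 ≠ 0 :=
  div_ne_zero (mt add_eq_zero_iff_neg_eq.1 hα.symm) two_ne_zero

def alphaIntegrand (α : ℝ) (a b : BoundedContinuousFunction Y ℝ) :
    BoundedContinuousFunction Y ℝ :=
  (2 / (1 + α)) • (phi (-1) a - phi α a) + (2 / (1 - α)) • (phi (-1) b - phi (-α) b)
    - phi α a * phi (-α) b

section alphaIntegrand

variable {α : ℝ} (hα1 : α ≠ 1) (hα2 : α ≠ -1)
include hα1 hα2

lemma alphaIntegrand_apply (a b : BoundedContinuousFunction Y ℝ) (x : Y) :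
    alphaIntegrand α a b x = Real.exp ((1 - α) / 2 * a x + (1 + α) / 2 * b x)
      * expDefect ((1 - α) / 2) ((1 + α) / 2) (a x - b x) := by
  have h1 : 1 - α ≠ 0 := sub_ne_zero.2 hα1.symm
  have h2 : 1 + α ≠ 0 := mt add_eq_zero_iff_neg_eq.1 hα2.symm
  rw [← exp_div_add_exp_div_sub_exp_eq (half_one_sub_ne_zero hα1) (half_one_add_ne_zero hα2)
    (by ring), Real.exp_add]
  simp only [alphaIntegrand, coe_sub, coe_add, coe_smul, coe_mul, Pi.sub_apply, Pi.add_apply,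
    Pi.mul_apply, smul_eq_mul, phi_apply_of_ne_one hα1,
    phi_apply_of_ne_one (show (-1 : ℝ) ≠ 1 by norm_num),
    phi_apply_of_ne_one (show -α ≠ 1 from fun h => hα2 (by linarith)), sub_neg_eq_add,
    one_add_one_eq_two, div_self (two_ne_zero : (2 : ℝ) ≠ 0), one_mul]
  field_simp
  ring

lemma alphaIntegrand_nonneg (a b : BoundedContinuousFunction Y ℝ) (x : Y) :
    0 ≤ alphaIntegrand α a b x := by
  rw [alphaIntegrand_apply hα1 hα2]
  exact mul_nonneg (Real.exp_pos _).le
    (expDefect_nonneg (half_one_sub_ne_zero hα1) (half_one_add_ne_zero hα2) (by ring) _)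

lemma alphaIntegrand_pos {a b : BoundedContinuousFunction Y ℝ} {x : Y} (hx : a x ≠ b x) :
    0 < alphaIntegrand α a b x := by
  rw [alphaIntegrand_apply hα1 hα2]
  exact mul_pos (Real.exp_pos _)
    (expDefect_pos (half_one_sub_ne_zero hα1) (half_one_add_ne_zero hα2) (by ring)
      (sub_ne_zero.2 hx))

lemma alphaIntegrand_self (a : BoundedContinuousFunction Y ℝ) : alphaIntegrand α a a = 0 := by
  ext x
  simp [alphaIntegrand_apply hα1 hα2]

end alphaIntegrand

lemma Dalpha_neg_alpha [MeasurableSpace Y] (μ : Measure Y) (α : ℝ)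
    (a b : BoundedContinuousFunction Y ℝ) :
    Dalpha μ (-α) a b = Dalpha μ α b a := by
  simp only [Dalpha, neg_neg, sub_neg_eq_add, ← sub_eq_add_neg, mul_comm (phi (-α) a _)]
  ring

lemma Dalpha_eq_integral_alphaIntegrand [MeasurableSpace Y] [OpensMeasurableSpace Y]
    (μ : Measure Y) [IsFiniteMeasure μ] (α : ℝ) (a b : BoundedContinuousFunction Y ℝ) :
    Dalpha μ α a b = ∫ x, alphaIntegrand α a b x ∂μ := by
  have hint (f : BoundedContinuousFunction Y ℝ) : Integrable f μ := f.integrable μ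
  have hdiff (r : ℝ) (f g : BoundedContinuousFunction Y ℝ) :
      Integrable (fun x => r * (f x - g x)) μ :=
    ((hint f).sub (hint g)).const_mul r
  simp only [alphaIntegrand, coe_sub, coe_add, coe_smul, coe_mul, Pi.sub_apply, Pi.add_apply,
    Pi.mul_apply, smul_eq_mul]
  rw [integral_sub, integral_add, integral_const_mul, integral_const_mul, Dalpha]
  exacts [hdiff _ _ _, hdiff _ _ _, (hdiff _ _ _).add (hdiff _ _ _), hint (phi α a * phi (-α) b)]

end Paper

theorem statement_6_general {X : Type*} [NormedAddCommGroup X]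
    [MeasurableSpace X] [OpensMeasurableSpace X]
    (B : Set X)
    (μ : Measure B) [IsProbabilityMeasure μ]
    (α : ℝ) (hα1 : α ≠ 1) (hα2 : α ≠ -1) (a b : BoundedContinuousFunction B ℝ) :
    0 ≤ Paper.Dalpha μ α a b ∧
    Paper.Dalpha μ (-α) a b = Paper.Dalpha μ α b a ∧
    ((∀ A : Set B, IsOpen A → A.Nonempty → 0 < μ A) →
      (Paper.Dalpha μ α a b = 0 ↔ a = b)) := by
  refine ⟨?_, Paper.Dalpha_neg_alpha μ α a b, fun hsupp => ?_⟩
  · rw [Paper.Dalpha_eq_integral_alphaIntegrand]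
    exact integral_nonneg (Paper.alphaIntegrand_nonneg hα1 hα2 a b)
  · have : μ.IsOpenPosMeasure := ⟨fun U hU hne => (hsupp U hU hne).ne'⟩
    rw [Paper.Dalpha_eq_integral_alphaIntegrand]
    refine ⟨fun hzero => ?_, fun hab => by simp [hab, Paper.alphaIntegrand_self hα1 hα2]⟩
    by_contra hab
    obtain ⟨x, hx⟩ := DFunLike.ne_iff.1 hab
    set F := Paper.alphaIntegrand α a b
    have hpos : 0 < ∫ x, F x ∂μ :=
      integral_pos_of_integrable_nonneg_nonzero F.continuous (F.integrable μ)
        (Paper.alphaIntegrand_nonneg hα1 hα2 a b) (Paper.alphaIntegrand_pos hα1 hα2 hx).ne'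
    exact hpos.ne' hzero

/-- for `α ≠ ±1` and all `a, b ∈ G`: (i) `D^α(a‖b) ≥ 0`;
(ii) `D^{−α}(a‖b) = D^α(b‖a)`; (iii) if `μ` has full support (every nonempty open
`A ⊆ B` has `μ A > 0`) then `D^α(a‖b) = 0 ↔ a = b`. -/
theorem statement_6 {X : Type*} [NormedAddCommGroup X] [NormedSpace ℝ X]
    [MeasurableSpace X] [OpensMeasurableSpace X]
    (B : Set X) (hB : IsOpen B) (hBne : B.Nonempty)
    (μ : Measure B) [IsProbabilityMeasure μ]
    (α : ℝ) (hα1 : α ≠ 1) (hα2 : α ≠ -1) (a b : BoundedContinuousFunction B ℝ) :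
    0 ≤ Paper.Dalpha μ α a b ∧
    Paper.Dalpha μ (-α) a b = Paper.Dalpha μ α b a ∧
    ((∀ A : Set B, IsOpen A → A.Nonempty → 0 < μ A) →
      (Paper.Dalpha μ α a b = 0 ↔ a = b)) :=
  statement_6_general B μ α hα1 hα2 a b
end
end

section
/- Fenchel–Legendre transform: fix α ∈ ℝ with α ≠ ±1, suppose μ has full support, i.e. μ(A) > 0 for every nonempty open A ⊆ B, and fix a, b ∈ G. Then for every c ∈ G, ∫_B (φ_{−α}(a) − φ_{−α}(b))·(φ_α(c) − φ_α(b)) dμ − D^α(c‖b) ≤ D^{−α}(a‖b), with equality if and only if c = a. Consequently D^{−α}(a‖b) = max over c ∈ G of { ∫_B (φ_{−α}(a) − φ_{−α}(b))·(φ_α(c) − φ_α(b)) dμ − D^α(c‖b) }, and the maximiser is unique. -/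
/-! With `u = (1 - α) / 2` the charts are `φ_α(a) = (e^{u a} - 1) / u` and
`φ_{-α}(a) = (e^{(1 - u) a} - 1) / (1 - u)`. Expanding, `D^α(c‖b) + D^{-α}(a‖b)` minus the pairing
`∫ (φ_{-α}(a) - φ_{-α}(b)) (φ_α(c) - φ_α(b)) dμ` is the integral of the pointwise gap
`((1 - u) e^a + u e^c - e^{(1 - u) a + u c}) / (u (1 - u))`, in which `b` no longer appears.
Strict convexity of `exp` makes this gap nonnegative and zero exactly where `c = a`; being
continuous, it integrates to zero against a measure charging every nonempty open set only if `c = a`. -/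

open MeasureTheory BoundedContinuousFunction

noncomputable section

open Real Set

theorem StrictConvexOn.div_sub_pos {s : Set ℝ} {f : ℝ → ℝ} (hf : StrictConvexOn ℝ s f)
    (h0 : 0 ∈ s) (h1 : 1 ∈ s) {u : ℝ} (hu : u ∈ s) (hu0 : u ≠ 0) (hu1 : u ≠ 1) :
    0 < ((1 - u) * f 0 + u * f 1 - f u) / (u * (1 - u)) := by
  -- The quotient is the difference of the secant slopes of `f` over `[0, 1]` and `[0, u]`,
  -- divided by `1 - u`; both change sign at `u = 1`.
  have hslope : ((1 - u) * f 0 + u * f 1 - f u) / (u * (1 - u))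
      = ((f 1 - f 0) / (1 - 0) - (f u - f 0) / (u - 0)) / (1 - u) := by
    have : 1 - u ≠ 0 := sub_ne_zero.2 hu1.symm
    field_simp
    ring
  rw [hslope]
  rcases lt_or_gt_of_ne hu1 with hlt | hgt
  · exact div_pos (sub_pos.2 (hf.secant_strict_mono h0 hu h1 hu0 one_ne_zero hlt))
      (sub_pos.2 hlt)
  · exact div_pos_of_neg_of_neg (sub_neg.2 (hf.secant_strict_mono h0 h1 hu one_ne_zero hu0 hgt))
      (sub_neg.2 hgt)

theorem strictConvexOn_exp_lineMap {t s : ℝ} (hts : t ≠ s) :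
    StrictConvexOn ℝ univ fun w => exp ((1 - w) * t + w * s) := by
  refine ⟨convex_univ, fun x _ y _ hxy a b ha hb hab => ?_⟩
  have hne : (1 - x) * t + x * s ≠ (1 - y) * t + y * s := fun h =>
    hxy (mul_right_cancel₀ (sub_ne_zero.2 hts.symm) (by linear_combination h))
  convert strictConvexOn_exp.2 (mem_univ _) (mem_univ _) hne ha hb hab using 2
  simp only [smul_eq_mul]
  linear_combination (-t) * hab

/-- The Jensen gap of `exp` at the weights `1 - u, u`, normalised by `u (1 - u)` so that it is
nonnegative for every `u ∉ {0, 1}`, including weights outside `[0, 1]`. -/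
def expGap (u t s : ℝ) : ℝ :=
  ((1 - u) * exp t + u * exp s - exp ((1 - u) * t + u * s)) / (u * (1 - u))

theorem expGap_self (u t : ℝ) : expGap u t t = 0 := by
  simp [expGap, ← add_mul]

theorem expGap_pos {u t s : ℝ} (hu0 : u ≠ 0) (hu1 : u ≠ 1) (hts : t ≠ s) : 0 < expGap u t s := by
  simpa [expGap] using
    (strictConvexOn_exp_lineMap hts).div_sub_pos (mem_univ 0) (mem_univ 1) (mem_univ u) hu0 hu1

theorem expGap_nonneg {u : ℝ} (hu0 : u ≠ 0) (hu1 : u ≠ 1) (t s : ℝ) : 0 ≤ expGap u t s := by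
  rcases eq_or_ne t s with rfl | hts
  · exact (expGap_self u t).ge
  · exact (expGap_pos hu0 hu1 hts).le

theorem expGap_eq_zero_iff {u t s : ℝ} (hu0 : u ≠ 0) (hu1 : u ≠ 1) : expGap u t s = 0 ↔ t = s :=
  ⟨fun h => by_contra fun hts => (expGap_pos hu0 hu1 hts).ne' h, fun h => h ▸ expGap_self u t⟩

namespace BoundedContinuousFunction

variable {Y : Type*} [TopologicalSpace Y] [MeasurableSpace Y] (μ : Measure Y)

theorem integral_coe_smul (r : ℝ) (f : Y →ᵇ ℝ) : ∫ x, (r • f) x ∂μ = r * ∫ x, f x ∂μ :=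
  integral_const_mul r _

variable [OpensMeasurableSpace Y] [IsFiniteMeasure μ]

theorem integral_coe_add (f g : Y →ᵇ ℝ) : ∫ x, (f + g) x ∂μ = ∫ x, f x ∂μ + ∫ x, g x ∂μ :=
  integral_add (f.integrable μ) (g.integrable μ)

theorem integral_coe_sub (f g : Y →ᵇ ℝ) : ∫ x, (f - g) x ∂μ = ∫ x, f x ∂μ - ∫ x, g x ∂μ :=
  integral_sub (f.integrable μ) (g.integrable μ)

end BoundedContinuousFunction

namespace Paper

variable {Y : Type*} [TopologicalSpace Y]

theorem phi_apply_of_ne_one_s11 {α : ℝ} (hα : α ≠ 1) (a : Y →ᵇ ℝ) (x : Y) :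
    phi α a x = 2 / (1 - α) * (exp ((1 - α) / 2 * a x) - 1) := by
  simp [phi, hα]

theorem phi_neg_one_apply (a : Y →ᵇ ℝ) (x : Y) : phi (-1) a x = exp (a x) - 1 := by
  rw [phi_apply_of_ne_one_s11 (by norm_num)]
  norm_num

def dalphaIntegrand (α : ℝ) (a b : Y →ᵇ ℝ) : Y →ᵇ ℝ :=
  (2 / (1 + α)) • (phi (-1) a - phi α a) + (2 / (1 - α)) • (phi (-1) b - phi (-α) b)
    - phi α a * phi (-α) b

theorem dalphaIntegrand_add_dalphaIntegrand_neg_sub {α : ℝ} (hα1 : α ≠ 1) (hα2 : α ≠ -1)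
    (a b c : Y →ᵇ ℝ) (x : Y) :
    dalphaIntegrand α c b x + dalphaIntegrand (-α) a b x
        - (phi (-α) a x - phi (-α) b x) * (phi α c x - phi α b x)
      = expGap ((1 - α) / 2) (a x) (c x) := by
  have hα1' : -α ≠ 1 := fun h => hα2 (by linarith)
  have hsplit : ∀ r, exp r = exp ((1 - α) / 2 * r) * exp ((1 + α) / 2 * r) := fun r => by
    rw [← exp_add]; ring_nf
  simp only [dalphaIntegrand, coe_add, coe_sub, coe_smul, coe_mul, Pi.add_apply, Pi.sub_apply,
    Pi.mul_apply, smul_eq_mul, phi_apply_of_ne_one_s11 hα1, phi_apply_of_ne_one_s11 hα1',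
    phi_neg_one_apply, sub_neg_eq_add, ← sub_eq_add_neg, neg_neg, expGap, exp_add,
    show 1 - (1 - α) / 2 = (1 + α) / 2 by ring]
  -- after splitting, both sides are rational functions of six exponentials
  rw [hsplit (a x), hsplit (b x), hsplit (c x)]
  have d1 : (1:ℝ) - α ≠ 0 := sub_ne_zero.2 hα1.symm
  have d2 : (1:ℝ) + α ≠ 0 := fun h => hα2 (by linarith)
  generalize exp ((1 - α) / 2 * a x) = A1
  generalize exp ((1 + α) / 2 * a x) = A2
  generalize exp ((1 - α) / 2 * b x) = B1
  generalize exp ((1 + α) / 2 * b x) = B2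
  generalize exp ((1 - α) / 2 * c x) = C1
  generalize exp ((1 + α) / 2 * c x) = C2
  field_simp
  ring

variable [MeasurableSpace Y] [OpensMeasurableSpace Y] (μ : Measure Y) [IsFiniteMeasure μ]

theorem Dalpha_eq_integral (α : ℝ) (a b : Y →ᵇ ℝ) :
    Dalpha μ α a b = ∫ x, dalphaIntegrand α a b x ∂μ := by
  rw [dalphaIntegrand, integral_coe_sub, integral_coe_add, integral_coe_smul, integral_coe_smul]
  rfl

theorem Dalpha_add_Dalpha_neg_sub_integral_mul {α : ℝ} (hα1 : α ≠ 1) (hα2 : α ≠ -1)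
    (a b c : Y →ᵇ ℝ) :
    Dalpha μ α c b + Dalpha μ (-α) a b
        - ∫ x, (phi (-α) a x - phi (-α) b x) * (phi α c x - phi α b x) ∂μ
      = ∫ x, expGap ((1 - α) / 2) (a x) (c x) ∂μ := by
  rw [Dalpha_eq_integral, Dalpha_eq_integral, ← integral_coe_add]
  exact (integral_coe_sub μ _ ((phi (-α) a - phi (-α) b) * (phi α c - phi α b))).symm.trans
    (integral_congr_ae (ae_of_all _ (dalphaIntegrand_add_dalphaIntegrand_neg_sub hα1 hα2 a b c)))

theorem integrable_expGap (u : ℝ) (a c : Y →ᵇ ℝ) :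
    Integrable (fun x => expGap u (a x) (c x)) μ :=
  (((u * (1 - u))⁻¹ • ((1 - u) • expG a + u • expG c
    - expG ((1 - u) • a + u • c))).integrable μ).congr
    (ae_of_all _ fun x => by simp [expGap, div_eq_inv_mul])

theorem integral_expGap_eq_zero_iff [μ.IsOpenPosMeasure] {u : ℝ} (hu0 : u ≠ 0) (hu1 : u ≠ 1)
    (a c : Y →ᵇ ℝ) : ∫ x, expGap u (a x) (c x) ∂μ = 0 ↔ a = c := by
  have hcont : Continuous fun x => expGap u (a x) (c x) := by
    unfold expGap
    fun_prop
  rw [integral_eq_zero_iff_of_nonneg (fun x => expGap_nonneg hu0 hu1 _ _)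
      (integrable_expGap μ u a c), hcont.ae_eq_iff_eq μ continuous_zero, funext_iff,
    BoundedContinuousFunction.ext_iff]
  simp only [Pi.zero_apply, expGap_eq_zero_iff hu0 hu1]

end Paper

theorem statement_11_general {X : Type*} [NormedAddCommGroup X]
    [MeasurableSpace X] [OpensMeasurableSpace X]
    (B : Set X)
    (μ : Measure B) [IsProbabilityMeasure μ]
    (α : ℝ) (hα1 : α ≠ 1) (hα2 : α ≠ -1)
    (hsupp : ∀ A : Set B, IsOpen A → A.Nonempty → 0 < μ A)
    (a b : BoundedContinuousFunction B ℝ) :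
    ∀ c : BoundedContinuousFunction B ℝ,
      (∫ x, (Paper.phi (-α) a x - Paper.phi (-α) b x)
          * (Paper.phi α c x - Paper.phi α b x) ∂μ)
        - Paper.Dalpha μ α c b ≤ Paper.Dalpha μ (-α) a b ∧
      ((∫ x, (Paper.phi (-α) a x - Paper.phi (-α) b x)
          * (Paper.phi α c x - Paper.phi α b x) ∂μ)
        - Paper.Dalpha μ α c b = Paper.Dalpha μ (-α) a b ↔ c = a) := by
  intro c
  have : μ.IsOpenPosMeasure := ⟨fun U hU hne => (hsupp U hU hne).ne'⟩
  have hu0 : (1 - α) / 2 ≠ 0 := fun h => hα1 (by linarith)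
  have hu1 : (1 - α) / 2 ≠ 1 := fun h => hα2 (by linarith)
  have hgap := Paper.Dalpha_add_Dalpha_neg_sub_integral_mul μ hα1 hα2 a b c
  have hnonneg : 0 ≤ ∫ x, expGap ((1 - α) / 2) (a x) (c x) ∂μ :=
    integral_nonneg fun x => expGap_nonneg hu0 hu1 _ _
  refine ⟨by linarith, ?_⟩
  rw [eq_comm (a := c), ← Paper.integral_expGap_eq_zero_iff μ hu0 hu1]
  constructor <;> intro h <;> linarith

/-- Fenchel–Legendre transform: fix `α ≠ ±1`, let `μ` have full
support, and fix `a, b ∈ G`.  Then for every `c ∈ G`,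
`∫ (φ_{−α}(a) − φ_{−α}(b))·(φ_α(c) − φ_α(b)) dμ − D^α(c‖b) ≤ D^{−α}(a‖b)`, with
equality iff `c = a`; hence `D^{−α}(a‖b)` is the maximum of the left-hand side over
`c ∈ G` and the maximiser is unique. -/
theorem statement_11 {X : Type*} [NormedAddCommGroup X] [NormedSpace ℝ X]
    [MeasurableSpace X] [OpensMeasurableSpace X]
    (B : Set X) (hB : IsOpen B) (hBne : B.Nonempty)
    (μ : Measure B) [IsProbabilityMeasure μ]
    (α : ℝ) (hα1 : α ≠ 1) (hα2 : α ≠ -1)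
    (hsupp : ∀ A : Set B, IsOpen A → A.Nonempty → 0 < μ A)
    (a b : BoundedContinuousFunction B ℝ) :
    ∀ c : BoundedContinuousFunction B ℝ,
      (∫ x, (Paper.phi (-α) a x - Paper.phi (-α) b x)
          * (Paper.phi α c x - Paper.phi α b x) ∂μ)
        - Paper.Dalpha μ α c b ≤ Paper.Dalpha μ (-α) a b ∧
      ((∫ x, (Paper.phi (-α) a x - Paper.phi (-α) b x)
          * (Paper.phi α c x - Paper.phi α b x) ∂μ)
        - Paper.Dalpha μ α c b = Paper.Dalpha μ (-α) a b ↔ c = a) :=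
  statement_11_general B μ α hα1 hα2 hsupp a b
end
end

section
/- The functional ψ : G → ℝ defined by ψ(a) := log ∫_B exp_G(a) dμ is well defined (the integral lies in (0, ∞)), is of class C^∞ (infinitely Fréchet differentiable), and its Fréchet derivative at a ∈ G is the continuous linear functional u ↦ (∫_B u·exp_G(a) dμ)/(∫_B exp_G(a) dμ), i.e. the expectation of u under the probability measure with density exp_G(a)/∫_B exp_G(a)dμ with respect to μ. -/
/-!
On the Banach algebra `C_b(B;ℝ)` the pointwise exponential is the exponential series of the
algebra (evaluation at a point is a continuous ring homomorphism, so it commutes with the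
series), and that series is analytic with derivative `u ↦ exp a * u`, the algebra being
commutative. Integration against a finite measure is a continuous linear functional, and the
integral of `exp a` is at least `exp (-‖a‖) > 0`, so composing with `Real.log` keeps everything
smooth and the chain rule gives the derivative.
-/

open MeasureTheory BoundedContinuousFunction

noncomputable section

namespace BoundedContinuousFunction

variable {Y : Type*} [TopologicalSpace Y]

theorem expG_eq_exp (a : Y →ᵇ ℝ) : Paper.expG a = NormedSpace.exp a := by
  ext x
  let evalAt : (Y →ᵇ ℝ) →+* ℝ :=
    { toFun := fun f => f x
      map_one' := rfl
      map_mul' := fun _ _ => rfl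
      map_zero' := rfl
      map_add' := fun _ _ => rfl }
  have hexp := NormedSpace.map_exp evalAt (evalCLM ℝ x).continuous a
  rw [Paper.expG_apply, Real.exp_eq_exp_ℝ]
  exact hexp.symm

theorem exp_neg_norm_le_expG (a : Y →ᵇ ℝ) (x : Y) : Real.exp (-‖a‖) ≤ Paper.expG a x :=
  Real.exp_le_exp.2 (neg_le_of_abs_le (a.norm_coe_le_norm x))

variable [MeasurableSpace Y] [OpensMeasurableSpace Y] (μ : Measure Y) [IsFiniteMeasure μ]

def integralCLM : (Y →ᵇ ℝ) →L[ℝ] ℝ :=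
  LinearMap.mkContinuous
    { toFun := fun f => ∫ x, f x ∂μ
      map_add' := fun f g => integral_add (f.integrable μ) (g.integrable μ)
      map_smul' := fun c _ => integral_const_mul c _ }
    (μ.real Set.univ) (norm_integral_le_mul_norm μ)

@[simp] theorem integralCLM_apply (f : Y →ᵇ ℝ) : integralCLM μ f = ∫ x, f x ∂μ := rfl

theorem integral_expG_pos [NeZero μ] (a : Y →ᵇ ℝ) : 0 < ∫ x, Paper.expG a x ∂μ :=
  calc 0 < μ.real Set.univ * Real.exp (-‖a‖) := by
        have : 0 < μ.real Set.univ := measureReal_univ_pos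
        positivity
    _ = ∫ _, Real.exp (-‖a‖) ∂μ := by rw [integral_const, smul_eq_mul]
    _ ≤ ∫ x, Paper.expG a x ∂μ :=
        integral_mono (integrable_const _) ((Paper.expG a).integrable μ)
          (exp_neg_norm_le_expG a)

theorem integral_expG_eq (a : Y →ᵇ ℝ) :
    ∫ x, Paper.expG a x ∂μ = integralCLM μ (NormedSpace.exp a) := by
  rw [integralCLM_apply, expG_eq_exp]

theorem contDiff_integral_expG {n : WithTop ℕ∞} :
    ContDiff ℝ n (fun a : Y →ᵇ ℝ => ∫ x, Paper.expG a x ∂μ) := by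
  simp only [integral_expG_eq]
  exact (integralCLM μ).contDiff.comp
    (AnalyticOnNhd.contDiff fun a _ => NormedSpace.exp_analytic a)

theorem hasFDerivAt_integral_expG (a : Y →ᵇ ℝ) :
    HasFDerivAt (fun c : Y →ᵇ ℝ => ∫ x, Paper.expG c x ∂μ)
      (integralCLM μ ∘L ContinuousLinearMap.mul ℝ (Y →ᵇ ℝ) (Paper.expG a)) a := by
  simp only [integral_expG_eq]
  refine ((integralCLM μ).hasFDerivAt.comp a (hasFDerivAt_exp (𝕂 := ℝ))).congr_fderiv ?_
  ext u
  simp [expG_eq_exp]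

variable [NeZero μ]

theorem contDiff_log_integral_expG {n : WithTop ℕ∞} :
    ContDiff ℝ n (fun a : Y →ᵇ ℝ => Real.log (∫ x, Paper.expG a x ∂μ)) :=
  (contDiff_integral_expG μ).log fun a => (integral_expG_pos μ a).ne'

theorem hasFDerivAt_log_integral_expG (a : Y →ᵇ ℝ) :
    HasFDerivAt (fun c : Y →ᵇ ℝ => Real.log (∫ x, Paper.expG c x ∂μ))
      ((∫ x, Paper.expG a x ∂μ)⁻¹ •
        (integralCLM μ ∘L ContinuousLinearMap.mul ℝ (Y →ᵇ ℝ) (Paper.expG a))) a :=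
  (hasFDerivAt_integral_expG μ a).log (integral_expG_pos μ a).ne'

end BoundedContinuousFunction

theorem statement_18_general {X : Type*} [NormedAddCommGroup X]
    [MeasurableSpace X] [OpensMeasurableSpace X]
    (B : Set X)
    (μ : Measure B) [IsProbabilityMeasure μ] :
    (∀ a : BoundedContinuousFunction B ℝ, 0 < ∫ x, Paper.expG a x ∂μ) ∧
    ContDiff ℝ (⊤ : ℕ∞)
      (fun a : BoundedContinuousFunction B ℝ => Real.log (∫ x, Paper.expG a x ∂μ)) ∧
    ∀ a : BoundedContinuousFunction B ℝ,
      ∃ D : BoundedContinuousFunction B ℝ →L[ℝ] ℝ,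
        (∀ u : BoundedContinuousFunction B ℝ,
          D u = (∫ x, u x * Paper.expG a x ∂μ) / ∫ x, Paper.expG a x ∂μ) ∧
        HasFDerivAt
          (fun c : BoundedContinuousFunction B ℝ => Real.log (∫ x, Paper.expG c x ∂μ))
          D a := by
  refine ⟨integral_expG_pos μ, contDiff_log_integral_expG μ, fun a => ?_⟩
  refine ⟨_, fun u => ?_, hasFDerivAt_log_integral_expG μ a⟩
  simp only [_root_.smul_apply, ContinuousLinearMap.comp_apply,
    ContinuousLinearMap.mul_apply', integralCLM_apply, coe_mul, Pi.mul_apply, smul_eq_mul]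
  simp_rw [mul_comm (Paper.expG a _)]
  exact inv_mul_eq_div _ _

/-- the functional `ψ(a) = log ∫ exp_G(a) dμ` is well defined (the
integral is strictly positive), of class `C^∞`, and its Fréchet derivative at `a` is
`u ↦ (∫ u·exp_G(a) dμ)/(∫ exp_G(a) dμ)`. -/
theorem statement_18 {X : Type*} [NormedAddCommGroup X] [NormedSpace ℝ X]
    [MeasurableSpace X] [OpensMeasurableSpace X]
    (B : Set X) (hB : IsOpen B) (hBne : B.Nonempty)
    (μ : Measure B) [IsProbabilityMeasure μ] :
    (∀ a : BoundedContinuousFunction B ℝ, 0 < ∫ x, Paper.expG a x ∂μ) ∧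
    ContDiff ℝ (⊤ : ℕ∞)
      (fun a : BoundedContinuousFunction B ℝ => Real.log (∫ x, Paper.expG a x ∂μ)) ∧
    ∀ a : BoundedContinuousFunction B ℝ,
      ∃ D : BoundedContinuousFunction B ℝ →L[ℝ] ℝ,
        (∀ u : BoundedContinuousFunction B ℝ,
          D u = (∫ x, u x * Paper.expG a x ∂μ) / ∫ x, Paper.expG a x ∂μ) ∧
        HasFDerivAt
          (fun c : BoundedContinuousFunction B ℝ => Real.log (∫ x, Paper.expG c x ∂μ))
          D a :=
  statement_18_general B μ
end
end
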